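/- arXiv:2408.05193 — 2 statements merged into one kernel-verified Lean document; each statement's English description precedes it below -/
import Mathlib

section
/- The linear system determining the symmetric SIAC kernel coefficients is nonsingular: the (r+1)×(r+1) matrix with entries M_{p,γ} = ∫ℝ B^{(k+1)}(y - x_γ) y^p dy (p, γ = 0, ..., r) is invertible when the nodes x_γ = -r/2 + γ are distinct. -/
open MeasureTheory

/-- The central B-spline: `Bspline k` is the B-spline of order `k+1`. -/
noncomputable def Bspline : ℕ → ℝ → ℝ
  | 0 => Set.indicator (Set.Icc (-(1:ℝ)/2) (1/2)) (fun _ => (1:ℝ))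
  | k + 1 => fun x => ∫ y, Bspline k (x - y) * Bspline 0 y

lemma Bspline_zero : Bspline 0 = Set.indicator (Set.Icc (-(1:ℝ)/2) (1/2)) (fun _ => (1:ℝ)) :=
  Bspline.eq_1
lemma Bspline_succ (k : ℕ) : Bspline (k+1) = fun x => ∫ y, Bspline k (x - y) * Bspline 0 y :=
  Bspline.eq_2 k

lemma integrable_of_bdd_supp {f : ℝ → ℝ} {C D : ℝ}
    (hm : AEStronglyMeasurable f volume) (hb : ∀ t, |t| ≤ C → ‖f t‖ ≤ D)
    (hs : ∀ t, C < |t| → f t = 0) : Integrable f := by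
  apply Integrable.mono' (g := Set.indicator (Set.Icc (-C) C) (fun _ => D))
  · rw [integrable_indicator_iff measurableSet_Icc]
    exact integrableOn_const measure_Icc_lt_top.ne (by simp)
  · exact hm
  · refine Filter.Eventually.of_forall fun t => ?_
    by_cases h : |t| ≤ C
    · have ht : t ∈ Set.Icc (-C) C := by rwa [Set.mem_Icc, ← abs_le]
      rw [Set.indicator_of_mem ht]
      exact hb t h
    · have ht : t ∉ Set.Icc (-C) C := by rwa [Set.mem_Icc, ← abs_le]
      rw [Set.indicator_of_notMem ht, hs t (not_le.mp h), norm_zero]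

lemma B0_meas : Measurable (Bspline 0) := by
  rw [Bspline_zero]; exact measurable_const.indicator measurableSet_Icc

lemma B0_nonneg : ∀ t, 0 ≤ Bspline 0 t := by
  rw [Bspline_zero]; exact fun t => Set.indicator_nonneg (fun _ _ => zero_le_one) t

lemma B0_le_one : ∀ t, Bspline 0 t ≤ 1 := by
  rw [Bspline_zero]; intro t
  by_cases h : t ∈ Set.Icc (-(1:ℝ)/2) (1/2) <;> simp [Set.indicator_apply, h] <;> split_ifs <;> norm_num

lemma B0_supp : ∀ t : ℝ, 1/2 < |t| → Bspline 0 t = 0 := by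
  rw [Bspline_zero]; intro t ht
  apply Set.indicator_of_notMem
  rw [Set.mem_Icc]
  rintro ⟨h1, h2⟩
  have := abs_le.mpr ⟨by linarith, h2⟩
  linarith

lemma B0_integrable : Integrable (Bspline 0) :=
  integrable_of_bdd_supp B0_meas.aestronglyMeasurable
    (fun t _ => by rw [Real.norm_eq_abs, abs_of_nonneg (B0_nonneg t)]; exact B0_le_one t)
    B0_supp

lemma B0_integral : ∫ t, Bspline 0 t = 1 := by
  rw [Bspline_zero, integral_indicator_const _ measurableSet_Icc]
  simp [Real.volume_Icc]
  norm_num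

lemma Bspline_props (k : ℕ) :
    Measurable (Bspline k) ∧ (∀ t, 0 ≤ Bspline k t) ∧ (∀ t, Bspline k t ≤ 1) ∧
    (∀ t : ℝ, ((k:ℝ)+1)/2 < |t| → Bspline k t = 0) ∧ (∫ t, Bspline k t) = 1 := by
  induction k with
  | zero =>
    refine ⟨B0_meas, B0_nonneg, B0_le_one, ?_, B0_integral⟩
    intro t ht
    exact B0_supp t (by push_cast at ht; linarith)
  | succ k ih =>
    obtain ⟨hm, h0, h1, hs, hint⟩ := ih
    have hF_meas : Measurable (fun p : ℝ × ℝ => Bspline k (p.1 - p.2) * Bspline 0 p.2) :=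
      (hm.comp (measurable_fst.sub measurable_snd)).mul (B0_meas.comp measurable_snd)
    have hmeas : Measurable (Bspline (k+1)) := by
      rw [Bspline_succ]
      exact (hF_meas.stronglyMeasurable.integral_prod_right').measurable
    -- integrand integrability at fixed x
    have hIx : ∀ x : ℝ, Integrable (fun y => Bspline k (x - y) * Bspline 0 y) := by
      intro x
      apply Integrable.mono' B0_integrable
        ((hm.comp (measurable_const.sub measurable_id)).mul B0_meas).aestronglyMeasurable
      refine Filter.Eventually.of_forall fun y => ?_
      show ‖Bspline k (x - y) * Bspline 0 y‖ ≤ Bspline 0 y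
      rw [Real.norm_eq_abs, abs_of_nonneg (mul_nonneg (h0 _) (B0_nonneg _))]
      exact mul_le_of_le_one_left (B0_nonneg y) (h1 _)
    have hnonneg : ∀ t, 0 ≤ Bspline (k+1) t := by
      intro t; rw [Bspline_succ]
      exact integral_nonneg fun y => mul_nonneg (h0 _) (B0_nonneg _)
    have hle : ∀ t, Bspline (k+1) t ≤ 1 := by
      intro t; rw [Bspline_succ]
      calc ∫ y, Bspline k (t - y) * Bspline 0 y ≤ ∫ y, Bspline 0 y :=
            integral_mono (hIx t) B0_integrable
              (fun y => mul_le_of_le_one_left (B0_nonneg y) (h1 _))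
        _ = 1 := B0_integral
    have hsupp : ∀ t : ℝ, (((k+1:ℕ):ℝ)+1)/2 < |t| → Bspline (k+1) t = 0 := by
      intro t ht
      push_cast at ht
      rw [Bspline_succ]
      have hz : ∀ y : ℝ, Bspline k (t - y) * Bspline 0 y = 0 := by
        intro y
        by_cases hy : |y| ≤ 1/2
        · have h1' : ((k:ℝ)+1)/2 < |t - y| := by
            have := abs_sub_abs_le_abs_sub t y
            linarith
          rw [hs _ h1', zero_mul]
        · rw [B0_supp y (not_le.mp hy), mul_zero]
      simp only [hz, integral_zero]
    refine ⟨hmeas, hnonneg, hle, hsupp, ?_⟩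
    -- the integral equals 1, via Fubini
    have hprod : Integrable (fun p : ℝ × ℝ => Bspline k (p.1 - p.2) * Bspline 0 p.2)
        (volume.prod volume) := by
      set C : ℝ := ((k:ℝ)+2)/2 with hC
      apply Integrable.mono'
        (g := Set.indicator (Set.Icc (-C) C ×ˢ Set.Icc (-(1:ℝ)/2) (1/2)) (fun _ => (1:ℝ)))
      · rw [integrable_indicator_iff (measurableSet_Icc.prod measurableSet_Icc)]
        apply integrableOn_const (ne_of_lt ?_) (by simp)
        rw [Measure.prod_prod]
        exact ENNReal.mul_lt_top measure_Icc_lt_top measure_Icc_lt_top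
      · exact hF_meas.aestronglyMeasurable
      · refine Filter.Eventually.of_forall fun p => ?_
        obtain ⟨x, y⟩ := p
        by_cases hmem : (x, y) ∈ Set.Icc (-C) C ×ˢ Set.Icc (-(1:ℝ)/2) (1/2)
        · rw [Set.indicator_of_mem hmem]
          rw [Real.norm_eq_abs, abs_of_nonneg (mul_nonneg (h0 _) (B0_nonneg _))]
          exact mul_le_one₀ (h1 _) (B0_nonneg _) (B0_le_one _)
        · rw [Set.indicator_of_notMem hmem]
          rw [Set.mem_prod, not_and_or] at hmem
          rcases hmem with hx | hy
          · by_cases hy2 : |y| ≤ 1/2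
            · have hxa : C < |x| := by
                rw [Set.mem_Icc, ← abs_le] at hx; exact not_le.mp hx
              have : ((k:ℝ)+1)/2 < |x - y| := by
                have := abs_sub_abs_le_abs_sub x y
                rw [hC] at hxa
                linarith
              simp [hs _ this]
            · simp [B0_supp y (not_le.mp hy2)]
          · have : 1/2 < |y| := by
              rw [Set.mem_Icc] at hy
              rcases lt_or_ge (1/2 : ℝ) (|y|) with h | h
              · exact h
              · exact absurd ⟨by rw [abs_le] at h; linarith [h.1], by rw [abs_le] at h; exact h.2⟩ hy
            simp [B0_supp y this]
    have swap := integral_integral_swap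
      (f := fun x y => Bspline k (x - y) * Bspline 0 y) (μ := volume) (ν := volume) hprod
    rw [Bspline_succ]
    simp only []
    rw [swap]
    have inner : ∀ y : ℝ, (∫ x, Bspline k (x - y) * Bspline 0 y) = Bspline 0 y := by
      intro y
      rw [integral_mul_const, integral_sub_right_eq_self (Bspline k) y, hint, one_mul]
    simp only [inner]
    exact B0_integral

lemma Bspline_moment_integrable (k i : ℕ) : Integrable (fun t => Bspline k t * t ^ i) := by
  obtain ⟨hm, h0, h1, hs, _⟩ := Bspline_props k
  have hC0 : (0:ℝ) ≤ ((k:ℝ)+1)/2 := by positivity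
  apply integrable_of_bdd_supp (C := ((k:ℝ)+1)/2) (D := (((k:ℝ)+1)/2) ^ i)
  · exact (hm.mul (measurable_id.pow_const i)).aestronglyMeasurable
  · intro t ht
    rw [Real.norm_eq_abs, abs_mul, abs_pow]
    calc |Bspline k t| * |t| ^ i ≤ 1 * (((k:ℝ)+1)/2) ^ i := by
          apply mul_le_mul
          · rw [abs_of_nonneg (h0 t)]; exact h1 t
          · exact pow_le_pow_left₀ (abs_nonneg t) ht i
          · positivity
          · exact zero_le_one
      _ = (((k:ℝ)+1)/2) ^ i := one_mul _
  · intro t ht; rw [hs t ht, zero_mul]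

lemma Bspline_moment (k p : ℕ) (x : ℝ) :
    (∫ y, Bspline k (y - x) * y ^ p) =
      ∑ j ∈ Finset.range (p+1),
        ((∫ t, Bspline k t * t ^ j) * ((p.choose j : ℝ))) * x ^ (p - j) := by
  have h1 : (∫ y, Bspline k (y - x) * y ^ p) = ∫ t, Bspline k t * (t + x) ^ p := by
    rw [← integral_sub_right_eq_self (fun t => Bspline k t * (t + x) ^ p) x]
    congr 1; ext y; rw [sub_add_cancel]
  rw [h1]
  have h2 : ∀ t : ℝ, Bspline k t * (t + x) ^ p =
      ∑ j ∈ Finset.range (p+1), (Bspline k t * t ^ j) * (x ^ (p - j) * (p.choose j : ℝ)) := by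
    intro t
    rw [add_pow, Finset.mul_sum]
    exact Finset.sum_congr rfl fun j _ => by ring
  simp only [h2]
  rw [integral_finset_sum _ fun j _ => (Bspline_moment_integrable k j).mul_const _]
  exact Finset.sum_congr rfl fun j _ => by rw [integral_mul_const]; ring

theorem siac_moment_matrix_invertible
    (k r : ℕ)
    (xγ : Fin (r + 1) → ℝ) (hxγ : ∀ γ, xγ γ = -(r : ℝ) / 2 + (γ : ℕ))
    (M : Matrix (Fin (r + 1)) (Fin (r + 1)) ℝ)
    (hM : ∀ p γ, M p γ = ∫ y, Bspline k (y - xγ γ) * y ^ (p : ℕ)) :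
    M.det ≠ 0 := by
  have hBint := (Bspline_props k).2.2.2.2
  set m : ℕ → ℝ := fun j => ∫ t, Bspline k t * t ^ j with hmdef
  have hm0 : m 0 = 1 := by
    simp only [hmdef, pow_zero, mul_one]; exact hBint
  set A : Matrix (Fin (r+1)) (Fin (r+1)) ℝ :=
    fun p q => if (q:ℕ) ≤ (p:ℕ) then
      m ((p:ℕ) - (q:ℕ)) * (((p:ℕ).choose ((p:ℕ) - (q:ℕ))) : ℝ) else 0 with hA
  have hMdecomp : M = A * (Matrix.vandermonde xγ).transpose := by
    ext p γ
    rw [hM, Bspline_moment, Matrix.mul_apply]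
    simp only [hA, Matrix.transpose_apply, Matrix.vandermonde_apply]
    rw [Fin.sum_univ_eq_sum_range (fun q => (if q ≤ (p:ℕ) then
      m ((p:ℕ) - q) * (((p:ℕ).choose ((p:ℕ) - q)) : ℝ) else 0) * xγ γ ^ q) (r+1)]
    rw [← Finset.sum_subset (Finset.range_subset_range.mpr (Nat.succ_le_succ (Nat.le_of_lt_succ p.isLt)))
      (by
        intro q _ hq
        rw [Finset.mem_range, not_lt] at hq
        rw [if_neg (by omega), zero_mul])]
    rw [← Finset.sum_range_reflect (fun q => (if q ≤ (p:ℕ) then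
      m ((p:ℕ) - q) * (((p:ℕ).choose ((p:ℕ) - q)) : ℝ) else 0) * xγ γ ^ q) ((p:ℕ)+1)]
    apply Finset.sum_congr rfl
    intro j hj
    rw [Finset.mem_range] at hj
    have hjp : j ≤ (p:ℕ) := Nat.le_of_lt_succ hj
    have h1 : (p:ℕ) + 1 - 1 - j = (p:ℕ) - j := by omega
    rw [h1, if_pos (Nat.sub_le _ _), Nat.sub_sub_self hjp]
  have hAtri : A.BlockTriangular OrderDual.toDual := by
    intro p q h
    have hpq : (p:ℕ) < (q:ℕ) := h
    simp only [hA]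
    rw [if_neg (by omega)]
  have hdetA : A.det = 1 := by
    rw [Matrix.det_of_lowerTriangular A hAtri]
    have hdiag : ∀ p : Fin (r+1), A p p = 1 := by
      intro p
      simp only [hA]
      rw [if_pos le_rfl, Nat.sub_self, hm0, Nat.choose_zero_right]
      norm_num
    simp [hdiag]
  have hinj : Function.Injective xγ := by
    intro a b hab
    rw [hxγ a, hxγ b] at hab
    have : ((a:ℕ):ℝ) = ((b:ℕ):ℝ) := by linarith
    exact Fin.ext (Nat.cast_injective this)
  rw [hMdecomp, Matrix.det_mul, hdetA, one_mul, Matrix.det_transpose]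
  exact Matrix.det_vandermonde_ne_zero_iff.mpr hinj
end

section
/- If the kernel K reproduces polynomials of degree ≤ r and u is r+1 times continuously differentiable with bounded (r+1)-st derivative, then the scaled filtered error satisfies |(K_H * u)(x) - u(x)| ≤ C H^{r+1} for all x, where C depends only on K and sup|u^{(r+1)}|. -/
open MeasureTheory
open scoped Nat

lemma my_iter_eq : ∀ (n : ℕ) (f : ℝ → ℝ), ContDiff ℝ n f → ∀ (s : Set ℝ),
    UniqueDiffOn ℝ s → ∀ x ∈ s, iteratedDerivWithin n f s x = iteratedDeriv n f x := by
  intro n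
  induction n with
  | zero => intro f _ s _ x _; simp
  | succ k ih =>
    intro f hf s hs x hx
    rw [iteratedDerivWithin_succ, iteratedDeriv_succ]
    rw [derivWithin_congr (fun y hy => ih f hf.of_succ s hs y hy)
      (ih f hf.of_succ s hs x hx)]
    exact ((hf.differentiable_iteratedDeriv k
      (by exact_mod_cast Nat.lt_succ_self k)) x).derivWithin (hs.uniqueDiffWithinAt hx)

lemma my_taylor_side {n : ℕ} {f : ℝ → ℝ} (hf : ContDiff ℝ (n + 1) f) {L : ℝ}
    (hL : ∀ x, |iteratedDeriv (n + 1) f x| ≤ L) {x₀ p : ℝ} (h : x₀ < p) :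
    |f p - ∑ k ∈ Finset.range (n + 1),
        (k ! : ℝ)⁻¹ * (p - x₀) ^ k * iteratedDeriv k f x₀| ≤
      L * (p - x₀) ^ (n + 1) / (n + 1)! := by
  have hud : UniqueDiffOn ℝ (Set.Icc x₀ p) := uniqueDiffOn_Icc h
  have hcd : ContDiffOn ℝ n f (Set.Icc x₀ p) := hf.of_succ.contDiffOn
  have hdiff : DifferentiableOn ℝ (iteratedDerivWithin n f (Set.Icc x₀ p)) (Set.Ioo x₀ p) := by
    refine ((hf.differentiable_iteratedDeriv n
      (by exact_mod_cast Nat.lt_succ_self n)).differentiableOn).congr ?_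
    intro y hy
    exact my_iter_eq n f (hf.of_le (by exact_mod_cast Nat.le_succ n)) _ hud y
      (Set.Ioo_subset_Icc_self hy)
  obtain ⟨x', hx', heq⟩ := taylor_mean_remainder_lagrange h.ne (by rwa [Set.uIcc_of_le h.le])
    (by rwa [Set.uIcc_of_le h.le, Set.uIoo_of_le h.le])
  rw [Set.uIcc_of_le h.le] at heq
  rw [Set.uIoo_of_le h.le] at hx'
  have hT : taylorWithinEval f n (Set.Icc x₀ p) x₀ p =
      ∑ k ∈ Finset.range (n + 1), (k ! : ℝ)⁻¹ * (p - x₀) ^ k * iteratedDeriv k f x₀ := by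
    rw [taylor_within_apply]
    refine Finset.sum_congr rfl fun k hk => ?_
    rw [my_iter_eq k f (hf.of_le (by
        exact_mod_cast Nat.le_of_lt_succ (Nat.lt_of_lt_of_le
          (Finset.mem_range.mp hk) (Nat.le_succ _)))) _ hud x₀
      (Set.left_mem_Icc.mpr h.le)]
    simp [smul_eq_mul]
  rw [← hT, heq]
  rw [my_iter_eq (n + 1) f hf _ hud x' (Set.Ioo_subset_Icc_self hx')]
  rw [abs_div, abs_mul, abs_pow, abs_of_pos (sub_pos.mpr h)]
  rw [abs_of_pos (by exact_mod_cast Nat.factorial_pos (n+1) : (0:ℝ) < ((n+1)! : ℝ))]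
  have hfact : (0:ℝ) < ((n+1)! : ℝ) := by exact_mod_cast Nat.factorial_pos (n+1)
  refine (div_le_div_iff_of_pos_right hfact).mpr ?_
  exact mul_le_mul_of_nonneg_right (hL x') (pow_nonneg (sub_pos.mpr h).le _)

lemma my_taylor_bound {n : ℕ} {f : ℝ → ℝ} (hf : ContDiff ℝ (n + 1) f) {L : ℝ}
    (hL : ∀ x, |iteratedDeriv (n + 1) f x| ≤ L) (x₀ p : ℝ) :
    |f p - ∑ k ∈ Finset.range (n + 1),
        (k ! : ℝ)⁻¹ * (p - x₀) ^ k * iteratedDeriv k f x₀| ≤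
      L * |p - x₀| ^ (n + 1) / (n + 1)! := by
  have hL0 : 0 ≤ L := le_trans (abs_nonneg _) (hL x₀)
  rcases lt_trichotomy x₀ p with h | h | h
  · rw [abs_of_pos (sub_pos.mpr h)]
    exact my_taylor_side hf hL h
  · subst h
    have : ∑ k ∈ Finset.range (n + 1),
        (k ! : ℝ)⁻¹ * (x₀ - x₀) ^ k * iteratedDeriv k f x₀ = f x₀ := by
      rw [Finset.sum_eq_single 0]
      · simp
      · intro k _ hk
        simp [zero_pow hk, sub_self]
      · simp
    rw [this, sub_self, abs_zero]
    positivity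
  · -- p < x₀ : use reflection
    set g : ℝ → ℝ := fun t => f (-t) with hg
    have hgc : ContDiff ℝ (n + 1) g := hf.comp (contDiff_neg)
    have hgL : ∀ x, |iteratedDeriv (n + 1) g x| ≤ L := by
      intro x
      rw [hg, iteratedDeriv_comp_neg]
      rw [smul_eq_mul, abs_mul, abs_pow, abs_neg, abs_one, one_pow, one_mul]
      exact hL (-x)
    have h' : -x₀ < -p := neg_lt_neg h
    have := my_taylor_side hgc hgL h'
    have hsum : ∑ k ∈ Finset.range (n + 1),
        (k ! : ℝ)⁻¹ * (-p - -x₀) ^ k * iteratedDeriv k g (-x₀) =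
        ∑ k ∈ Finset.range (n + 1),
        (k ! : ℝ)⁻¹ * (p - x₀) ^ k * iteratedDeriv k f x₀ := by
      refine Finset.sum_congr rfl fun k _ => ?_
      rw [hg, iteratedDeriv_comp_neg, neg_neg, smul_eq_mul]
      have : (-p - -x₀ : ℝ) = -(p - x₀) := by ring
      rw [this, neg_pow]
      ring_nf
      rw [mul_comm k 2, pow_mul, neg_one_sq, one_pow, mul_one]
    have hgp : g (-p) = f p := by rw [hg]; simp
    rw [hgp, hsum] at this
    have habs : (-p - -x₀ : ℝ) = |p - x₀| := by
      rw [abs_of_neg (sub_neg.mpr h)]; ring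
    rw [habs] at this
    exact this

lemma my_integrable_mul {K : ℝ → ℝ} (hK : Integrable K) {a : ℝ}
    (hsupp : ∀ y, y ∉ Set.Icc (-a) a → K y = 0) {w : ℝ → ℝ} (hw : Continuous w) :
    Integrable (fun y => K y * w y) := by
  by_cases ha : -a ≤ a
  · set c : ℝ → ℝ := fun y => max (-a) (min a y) with hc
    have hcc : Continuous c := continuous_const.max (continuous_const.min continuous_id)
    have hmem : ∀ y, c y ∈ Set.Icc (-a) a := by
      intro y
      refine ⟨le_max_left _ _, max_le ha (min_le_left _ _)⟩
    have heq : (fun y => K y * w y) = fun y => w (c y) * K y := by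
      funext y
      by_cases hy : y ∈ Set.Icc (-a) a
      · have : c y = y := by
          rw [hc]
          simp only
          rw [min_eq_right hy.2, max_eq_right hy.1]
        rw [this, mul_comm]
      · simp [hsupp y hy]
    obtain ⟨C, hC⟩ := (isCompact_Icc (a := -a) (b := a)).exists_bound_of_continuousOn
      hw.continuousOn
    rw [heq]
    exact hK.bdd_mul (c := C) ((hw.comp hcc).aestronglyMeasurable)
      (Filter.Eventually.of_forall fun y => hC (c y) (hmem y))
  · have : (fun y => K y * w y) = fun _ => (0:ℝ) := by
      funext y
      rw [hsupp y (by rw [Set.Icc_eq_empty ha]; exact Set.notMem_empty y), zero_mul]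
    rw [this]
    exact integrable_zero _ _ _

theorem siac_accuracy_smooth_region
    (K : ℝ → ℝ) (a : ℝ) (r : ℕ) (u : ℝ → ℝ) (L : ℝ)
    (hKint : Integrable K)
    (hKsupp : ∀ y, y ∉ Set.Icc (-a) a → K y = 0)
    (hKcons : (∫ y, K y) = 1)
    (hKmom : ∀ m : ℕ, 1 ≤ m → m ≤ r → (∫ y, K y * y ^ m) = 0)
    (hu : ContDiff ℝ (r + 1) u)
    (huL : ∀ x, |iteratedDeriv (r + 1) u x| ≤ L) :
    ∀ H : ℝ, 0 < H → ∀ x : ℝ,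
      |(∫ ξ, (1 / H) * K ((x - ξ) / H) * u ξ) - u x| ≤
        (L * a ^ (r + 1) * (∫ y, |K y|) / (Nat.factorial (r + 1))) * H ^ (r + 1) := by
  intro H hH x
  have hL0 : 0 ≤ L := le_trans (abs_nonneg _) (huL 0)
  have ha : 0 ≤ a := by
    by_contra hcon
    push_neg at hcon
    have : ∀ y, K y = 0 := fun y =>
      hKsupp y (by rw [Set.Icc_eq_empty (by linarith)]; exact Set.notMem_empty y)
    rw [show K = fun _ => (0:ℝ) from funext this] at hKcons
    simp at hKcons
  -- change of variables
  have h1 : (∫ ξ, (1 / H) * K ((x - ξ) / H) * u ξ) = ∫ y, K y * u (x - H * y) := by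
    have e1 : (∫ ξ, (1 / H) * K ((x - ξ) / H) * u ξ)
        = ∫ t, (1 / H) * K (t / H) * u (x - t) := by
      rw [← integral_sub_left_eq_self (fun t => (1 / H) * K (t / H) * u (x - t)) volume x]
      congr 1
      funext ξ
      simp
    have e2 : (∫ y : ℝ, (1 / H) * K ((H * y) / H) * u (x - H * y))
        = |H⁻¹| • ∫ t, (1 / H) * K (t / H) * u (x - t) :=
      Measure.integral_comp_mul_left (fun t => (1 / H) * K (t / H) * u (x - t)) H
    rw [e1]
    have e3 : ∀ y : ℝ, (1 / H) * K ((H * y) / H) * u (x - H * y)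
        = (1 / H) * (K y * u (x - H * y)) := by
      intro y
      rw [mul_div_cancel_left₀ _ (ne_of_gt hH)]
      ring
    rw [show (∫ y : ℝ, (1 / H) * K ((H * y) / H) * u (x - H * y))
        = (1 / H) * ∫ y, K y * u (x - H * y) by
      rw [← integral_const_mul]; exact integral_congr_ae (Filter.Eventually.of_forall e3)] at e2
    rw [abs_of_pos (inv_pos.mpr hH), smul_eq_mul] at e2
    have : (∫ t, (1 / H) * K (t / H) * u (x - t))
        = H * ((1 / H) * ∫ y, K y * u (x - H * y)) := by
      rw [e2]; field_simp
    rw [this]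
    field_simp
  -- Taylor polynomial value
  set D : ℕ → ℝ := fun k => iteratedDeriv k u x with hD
  set T : ℝ → ℝ := fun y => ∑ k ∈ Finset.range (r + 1),
    (k ! : ℝ)⁻¹ * (-(H * y)) ^ k * D k with hT
  have hTcont : Continuous T := by
    apply continuous_finset_sum
    intro k _
    fun_prop
  have hint1 : Integrable (fun y => K y * u (x - H * y)) :=
    my_integrable_mul hKint hKsupp (hu.continuous.comp (by fun_prop))
  have hintT : Integrable (fun y => K y * T y) :=
    my_integrable_mul hKint hKsupp hTcont
  have h2 : (∫ y, K y * T y) = u x := by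
    have hsplit : (fun y => K y * T y) = fun y => ∑ k ∈ Finset.range (r + 1),
        ((k ! : ℝ)⁻¹ * (-H) ^ k * D k) * (K y * y ^ k) := by
      funext y
      rw [hT, Finset.mul_sum]
      refine Finset.sum_congr rfl fun k _ => ?_
      rw [show (-(H * y) : ℝ) = (-H) * y by ring, mul_pow]
      ring
    rw [hsplit, integral_finset_sum]
    · have hterm : ∀ k ∈ Finset.range (r + 1),
          (∫ y, ((k ! : ℝ)⁻¹ * (-H) ^ k * D k) * (K y * y ^ k))
          = ((k ! : ℝ)⁻¹ * (-H) ^ k * D k) * ∫ y, K y * y ^ k := by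
        intro k _
        exact integral_const_mul _ _
      rw [Finset.sum_congr rfl hterm]
      rw [Finset.sum_eq_single 0]
      · simp only [pow_zero, mul_one]
        rw [hKcons, hD]
        simp
      · intro k hk hk0
        rw [hKmom k (Nat.one_le_iff_ne_zero.mpr hk0)
          (Nat.lt_succ_iff.mp (Finset.mem_range.mp hk)), mul_zero]
      · simp
    · intro k _
      have : (fun y => ((k ! : ℝ)⁻¹ * (-H) ^ k * D k) * (K y * y ^ k))
          = fun y => K y * (((k ! : ℝ)⁻¹ * (-H) ^ k * D k) * y ^ k) := by
        funext y; ring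
      rw [this]
      exact my_integrable_mul hKint hKsupp (by fun_prop)
  -- final bound
  rw [h1, ← h2, ← integral_sub hint1 hintT]
  set B : ℝ := L * (a * H) ^ (r + 1) / (r + 1)! with hB
  have hB0 : 0 ≤ B := by positivity
  have hbound : ∀ y, ‖K y * u (x - H * y) - K y * T y‖ ≤ |K y| * B := by
    intro y
    by_cases hy : y ∈ Set.Icc (-a) a
    · rw [← mul_sub, Real.norm_eq_abs, abs_mul]
      gcongr
      have htay := my_taylor_bound hu huL x (x - H * y)
      have hps : ∀ k : ℕ, ((x - H * y) - x) ^ k = (-(H * y)) ^ k := by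
        intro k; congr 1; ring
      have hsum2 : ∑ k ∈ Finset.range (r + 1),
          (k ! : ℝ)⁻¹ * ((x - H * y) - x) ^ k * iteratedDeriv k u x = T y := by
        rw [hT]
        exact Finset.sum_congr rfl fun k _ => by rw [hps k, hD]
      rw [hsum2] at htay
      refine le_trans htay ?_
      rw [hB]
      have habs : |(x - H * y) - x| = H * |y| := by
        rw [show (x - H * y) - x = -(H * y) by ring, abs_neg, abs_mul,
          abs_of_pos hH]
      rw [habs]
      have hya : |y| ≤ a := abs_le.mpr ⟨hy.1, hy.2⟩
      have h2' : (H * |y|) ^ (r + 1) ≤ (a * H) ^ (r + 1) := by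
        rw [mul_comm a H]
        exact pow_le_pow_left₀ (by positivity) (mul_le_mul_of_nonneg_left hya hH.le) _
      have hfact : (0:ℝ) < ((r+1)! : ℝ) := by exact_mod_cast Nat.factorial_pos (r+1)
      refine (div_le_div_iff_of_pos_right hfact).mpr ?_
      exact mul_le_mul_of_nonneg_left h2' hL0
    · rw [hKsupp y hy]
      simp
  have hnormle := norm_integral_le_of_norm_le
    (g := fun y => |K y| * B) (hKint.abs.mul_const B)
    (Filter.Eventually.of_forall hbound)
  rw [Real.norm_eq_abs] at hnormle
  refine le_trans hnormle ?_
  rw [integral_mul_const]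
  rw [hB, mul_pow]
  have : (∫ y, |K y|) * (L * (a ^ (r + 1) * H ^ (r + 1)) / (r + 1)!)
      = L * a ^ (r + 1) * (∫ y, |K y|) / ((r + 1)! : ℝ) * H ^ (r + 1) := by
    ring
  rw [this]
end
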